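/- arXiv:math/0701714 — 9 statements merged into one kernel-verified Lean document; each statement's English description precedes it below -/
import Mathlib

section
/- A loop satisfies the identity x·(x·(y·z)) = ((x·x)·y)·z (identity A15) if and only if it satisfies the LC identity (x·x)·(y·z) = (x·(x·y))·z. -/
/-- A loop: a set with multiplication, left division `ldiv` (written `\`),
right division `rdiv` (written `/`), and a two-sided identity `e`. -/
structure Loop (α : Type) where
  mul : α → α → α
  ldiv : α → α → α
  rdiv : α → α → α
  e : α
  mul_ldiv : ∀ a b, mul a (ldiv a b) = b
  rdiv_mul : ∀ a b, mul (rdiv b a) a = b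
  ldiv_mul : ∀ a b, ldiv a (mul a b) = b
  mul_rdiv : ∀ a b, rdiv (mul b a) a = b
  e_mul : ∀ a, mul e a = a
  mul_e : ∀ a, mul a e = a

theorem stmt_1 (α : Type) (L : Loop α)  :
    (∀ x y z : α, L.mul x (L.mul x (L.mul y z)) = L.mul (L.mul (L.mul x x) y) z) ↔ (∀ x y z : α, L.mul (L.mul x x) (L.mul y z) = L.mul (L.mul x (L.mul x y)) z) := by
  constructor
  · intro h x y z
    have key : ∀ x y : α, L.mul x (L.mul x y) = L.mul (L.mul x x) y := by
      intro x y
      have := h x y L.e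
      simpa [L.mul_e] using this
    rw [← key x (L.mul y z), h, key]
  · intro h x y z
    have key : ∀ x y : α, L.mul x (L.mul x y) = L.mul (L.mul x x) y := by
      intro x y
      have := h x y L.e
      simpa [L.mul_e] using this.symm
    rw [key x (L.mul y z), h, ← key]
end

section
/- A loop satisfying the identity x·((x·y)·z) = (x·(x·y))·z (identity A24) is a group, i.e., it satisfies the associative law x·(y·z)=(x·y)·z for all x,y,z. -/
theorem stmt_2 (α : Type) (L : Loop α) (h : ∀ x y z : α, L.mul x (L.mul (L.mul x y) z) = L.mul (L.mul x (L.mul x y)) z) :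
    ∀ x y z : α, L.mul x (L.mul y z) = L.mul (L.mul x y) z := by
  intro x y z
  simpa only [L.mul_ldiv] using h x (L.ldiv x y) z
end

section
/- A loop satisfying x·(y·(z·x)) = (x·(y·z))·x for all x, y, z (identity D14) is associative, i.e. it is a group. -/
theorem stmt_3 (α : Type) (L : Loop α) (h : ∀ x y z : α, L.mul x (L.mul y (L.mul z x)) = L.mul (L.mul x (L.mul y z)) x) :
    ∀ x y z : α, L.mul x (L.mul y z) = L.mul (L.mul x y) z := by
  intro x y z
  have flex : ∀ a b, L.mul a (L.mul b a) = L.mul (L.mul a b) a := by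
    intro a b
    have := h a b L.e
    simpa [L.mul_e, L.e_mul] using this
  have key : L.mul z (L.mul x (L.mul y z)) = L.mul z (L.mul (L.mul x y) z) :=
    calc L.mul z (L.mul x (L.mul y z)) = L.mul (L.mul z (L.mul x y)) z := h z x y
    _ = L.mul z (L.mul (L.mul x y) z) := (flex z (L.mul x y)).symm
  have := congrArg (L.ldiv z) key
  simpa [L.ldiv_mul] using this
end

section
/- A loop satisfying the identity x·((y·x)·z) = ((x·y)·x)·z for all x,y,z (identity B24) is a group. -/
theorem stmt_4 (α : Type) (L : Loop α) (h : ∀ x y z : α, L.mul x (L.mul (L.mul y x) z) = L.mul (L.mul (L.mul x y) x) z) :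
    ∀ x y z : α, L.mul x (L.mul y z) = L.mul (L.mul x y) z := by
  intro x y z
  have key := h x (L.rdiv y x) z
  have key0 := h x (L.rdiv y x) L.e
  rw [L.rdiv_mul] at key0
  simp only [L.mul_e] at key0
  rw [L.rdiv_mul] at key
  rw [key, ← key0]
end

section
/- Every loop satisfying the identity x·(y·(y·z)) = (x·y)·(y·z) for all x, y, z is associative, i.e. is a group. -/
theorem stmt_5 (α : Type) (L : Loop α) (h : ∀ x y z : α, L.mul x (L.mul y (L.mul y z)) = L.mul (L.mul x y) (L.mul y z)) :
    ∀ x y z : α, L.mul x (L.mul y z) = L.mul (L.mul x y) z := by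
  intro x y z
  have := h x y (L.ldiv y z)
  rwa [L.mul_ldiv] at this
end

section
/- Every LC-loop has the left inverse property: if a loop satisfies (x·x)·(y·z) = (x·(x·y))·z for all x,y,z, then (e/x)·(x·y) = y for all x,y, where e is the identity. -/
/-!
Putting `z = e` in the LC identity gives left alternativity `(x·x)·y = x·(x·y)`, and putting
`y = x\e` gives `(x\e)·z = (x·x)\(x·z)`. At `z = x` the latter says `(x\e)·x = e`, so
`x\e = e/x`, and then `(e/x)·(x·y) = (x·x)\(x·(x·y)) = (x·x)\((x·x)·y) = y`.
-/

namespace Loop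

variable {α : Type} (L : Loop α)

theorem eq_ldiv_of_mul_eq {a b c : α} (hab : L.mul a b = c) : b = L.ldiv a c := by
  rw [← hab, L.ldiv_mul]

theorem eq_rdiv_of_mul_eq {a b c : α} (hab : L.mul a b = c) : a = L.rdiv c b := by
  rw [← hab, L.mul_rdiv]

def IsLC : Prop :=
  ∀ x y z : α, L.mul (L.mul x x) (L.mul y z) = L.mul (L.mul x (L.mul x y)) z

variable {L}

theorem IsLC.mul_self_mul (hL : L.IsLC) (x y : α) :
    L.mul (L.mul x x) y = L.mul x (L.mul x y) := by
  simpa only [L.mul_e] using hL x y L.e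

theorem IsLC.ldiv_e_mul (hL : L.IsLC) (x z : α) :
    L.mul (L.ldiv x L.e) z = L.ldiv (L.mul x x) (L.mul x z) :=
  L.eq_ldiv_of_mul_eq <| by rw [hL, L.mul_ldiv, L.mul_e]

theorem IsLC.rdiv_e_eq_ldiv_e (hL : L.IsLC) (x : α) : L.rdiv L.e x = L.ldiv x L.e := by
  refine (L.eq_rdiv_of_mul_eq ?_).symm
  rw [hL.ldiv_e_mul]
  simpa only [L.mul_e] using L.ldiv_mul (L.mul x x) L.e

theorem IsLC.rdiv_e_mul_mul (hL : L.IsLC) (x y : α) :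
    L.mul (L.rdiv L.e x) (L.mul x y) = y := by
  rw [hL.rdiv_e_eq_ldiv_e, hL.ldiv_e_mul, ← hL.mul_self_mul, L.ldiv_mul]

end Loop

theorem stmt_7 (α : Type) (L : Loop α) (h : ∀ x y z : α, L.mul (L.mul x x) (L.mul y z) = L.mul (L.mul x (L.mul x y)) z) :
    ∀ x y : α, L.mul (L.rdiv L.e x) (L.mul x y) = y :=
  Loop.IsLC.rdiv_e_mul_mul h
end

section
/- In a loop satisfying identity C14, e/x = x/(x·x) for every x; equivalently, (e/x)·(x·x) = x. -/
namespace Loop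

variable {α : Type} (L : Loop α)

def IsC14 : Prop :=
  ∀ x y z : α, L.mul x (L.mul y (L.mul y z)) = L.mul (L.mul x (L.mul y y)) z

theorem rdiv_eq_of_mul_eq {a b c : α} (h : L.mul a b = c) : L.rdiv c b = a := by
  rw [← h, L.mul_rdiv]

theorem mul_right_cancel {a b c : α} (h : L.mul a c = L.mul b c) : a = b := by
  rw [← L.mul_rdiv c a, h, L.mul_rdiv]

theorem rdiv_e_mul_mul_self_of_isC14 (hL : L.IsC14) (x : α) :
    L.mul (L.rdiv L.e x) (L.mul x x) = x := by
  set z := L.ldiv x L.e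
  have hxz : L.mul x z = L.e := L.mul_ldiv x L.e
  apply L.mul_right_cancel (c := z)
  calc L.mul (L.mul (L.rdiv L.e x) (L.mul x x)) z
      = L.mul (L.rdiv L.e x) (L.mul x (L.mul x z)) := (hL _ x z).symm
    _ = L.mul x z := by rw [hxz, L.mul_e, L.rdiv_mul]

end Loop

theorem stmt_11 (α : Type) (L : Loop α) (h : ∀ x y z : α, L.mul x (L.mul y (L.mul y z)) = L.mul (L.mul x (L.mul y y)) z) :
    ∀ x : α, L.rdiv L.e x = L.rdiv x (L.mul x x) ∧ L.mul (L.rdiv L.e x) (L.mul x x) = x := by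
  intro x
  have hx := L.rdiv_e_mul_mul_self_of_isC14 h x
  exact ⟨(L.rdiv_eq_of_mul_eq hx).symm, hx⟩
end

section
/- In a loop with the left inverse property satisfying C14, inverses of products with squares obey (x·(y·y))⁻¹ = y⁻¹·(y⁻¹·x⁻¹), where x⁻¹ denotes the two-sided inverse e/x = x\e. -/
/-! In a left inverse property loop a right inverse is the inverse, so it suffices to check
`(x (y y)) (y⁻¹ (y⁻¹ x⁻¹)) = e`. C14 with `z = y⁻¹ (y⁻¹ x⁻¹)` rewrites the left side as
`x (y (y (y⁻¹ (y⁻¹ x⁻¹))))`, which collapses to `x x⁻¹ = e` by cancelling twice. -/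

namespace Loop

variable {α : Type} (L : Loop α)

theorem rdiv_e_eq_of_mul_eq_e (lip : ∀ x y : α, L.mul (L.rdiv L.e x) (L.mul x y) = y)
    {a b : α} (hab : L.mul a b = L.e) : L.rdiv L.e a = b := by
  simpa only [hab, L.mul_e] using lip a b

theorem rdiv_e_rdiv_e (lip : ∀ x y : α, L.mul (L.rdiv L.e x) (L.mul x y) = y) (a : α) :
    L.rdiv L.e (L.rdiv L.e a) = a :=
  L.rdiv_e_eq_of_mul_eq_e lip (L.rdiv_mul a L.e)

theorem mul_rdiv_e (lip : ∀ x y : α, L.mul (L.rdiv L.e x) (L.mul x y) = y) (a : α) :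
    L.mul a (L.rdiv L.e a) = L.e := by
  simpa only [L.rdiv_e_rdiv_e lip] using L.rdiv_mul (L.rdiv L.e a) L.e

theorem mul_rdiv_e_mul (lip : ∀ x y : α, L.mul (L.rdiv L.e x) (L.mul x y) = y) (a b : α) :
    L.mul a (L.mul (L.rdiv L.e a) b) = b := by
  simpa only [L.rdiv_e_rdiv_e lip] using lip (L.rdiv L.e a) b

end Loop

theorem stmt_13 (α : Type) (L : Loop α) (lip : ∀ x y : α, L.mul (L.rdiv L.e x) (L.mul x y) = y) (h : ∀ x y z : α, L.mul x (L.mul y (L.mul y z)) = L.mul (L.mul x (L.mul y y)) z) :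
    ∀ x y : α, L.rdiv L.e (L.mul x (L.mul y y)) = L.mul (L.rdiv L.e y) (L.mul (L.rdiv L.e y) (L.rdiv L.e x)) := by
  intro x y
  apply L.rdiv_e_eq_of_mul_eq_e lip
  rw [← h, L.mul_rdiv_e_mul lip, L.mul_rdiv_e_mul lip, L.mul_rdiv_e lip]
end

section
/- A loop satisfying the extra identity x·(y·(z·x)) = ((x·y)·z)·x (D15) satisfies the identity (x·y)·(x·z) = (x·(y·x))·z (B23). -/
/-!
Substituting divisions into D15 shows that both divisions are multiplications by the two-sided
inverse `x⁻¹ := x \ e`, so the loop has the inverse property and `(x y)⁻¹ = y⁻¹ x⁻¹`.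
For `s := (x y)(x z)`, D15 at `(x⁻¹, s, z⁻¹)` reads
`x⁻¹ (s (xz)⁻¹) = ((x⁻¹ s) z⁻¹) x⁻¹`; the left side collapses to `y`, and cancelling on the
right side gives `s = x ((y x) z)`.
-/

namespace Loop

variable {α : Type} (L : Loop α)

local infixl:70 " ⬝ " => L.mul

def SatisfiesD15 : Prop := ∀ x y z : α, x ⬝ (y ⬝ (z ⬝ x)) = ((x ⬝ y) ⬝ z) ⬝ x

def SatisfiesB23 : Prop := ∀ x y z : α, x ⬝ ((y ⬝ x) ⬝ z) = (x ⬝ y) ⬝ (x ⬝ z)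

def inv (x : α) : α := L.ldiv x L.e

theorem rdiv_self (x : α) : L.rdiv x x = L.e := by
  simpa only [L.e_mul] using L.mul_rdiv x L.e

variable {L}

namespace SatisfiesD15

variable (hL : L.SatisfiesD15)
include hL

theorem rdiv_eq_mul_e_rdiv (u x : α) : L.rdiv u x = u ⬝ L.rdiv L.e x := by
  have key : u = (u ⬝ L.rdiv L.e x) ⬝ x := by
    simpa only [L.rdiv_mul, L.mul_e, L.mul_ldiv] using hL x (L.ldiv x u) (L.rdiv L.e x)
  rw [key, L.mul_rdiv, ← key]

theorem ldiv_eq_ldiv_e_mul (u x : α) : L.ldiv x u = L.ldiv x L.e ⬝ u := by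
  have key : x ⬝ (L.ldiv x L.e ⬝ u) = u := by
    simpa only [L.rdiv_mul, L.mul_ldiv, L.e_mul] using hL x (L.ldiv x L.e) (L.rdiv u x)
  rw [← key, L.ldiv_mul, key]

theorem e_rdiv_eq_inv (x : α) : L.rdiv L.e x = L.inv x := by
  have hx : x ⬝ L.rdiv L.e x = L.e := by rw [← hL.rdiv_eq_mul_e_rdiv, rdiv_self]
  conv_rhs => rw [inv, ← hx, L.ldiv_mul]

theorem inv_mul_cancel_left (x u : α) : L.inv x ⬝ (x ⬝ u) = u := by
  rw [inv, ← hL.ldiv_eq_ldiv_e_mul, L.ldiv_mul]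

theorem mul_inv_cancel_left (x u : α) : x ⬝ (L.inv x ⬝ u) = u := by
  rw [inv, ← hL.ldiv_eq_ldiv_e_mul, L.mul_ldiv]

theorem mul_inv_cancel_right (u x : α) : (u ⬝ x) ⬝ L.inv x = u := by
  rw [← hL.e_rdiv_eq_inv, ← hL.rdiv_eq_mul_e_rdiv, L.mul_rdiv]

theorem inv_mul_cancel_right (u x : α) : (u ⬝ L.inv x) ⬝ x = u := by
  rw [← hL.e_rdiv_eq_inv, ← hL.rdiv_eq_mul_e_rdiv, L.rdiv_mul]

theorem mul_inv_rev (x y : α) : L.inv (x ⬝ y) = L.inv y ⬝ L.inv x := by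
  have hy : L.inv (x ⬝ y) ⬝ x = L.inv y := by
    simpa only [hL.mul_inv_cancel_right] using hL.inv_mul_cancel_left (x ⬝ y) (L.inv y)
  rw [← hL.mul_inv_cancel_right (L.inv (x ⬝ y)) x, hy]

theorem satisfiesB23 : L.SatisfiesB23 := by
  intro x y z
  set s := (x ⬝ y) ⬝ (x ⬝ z)
  have hD := hL (L.inv x) s (L.inv z)
  rw [← hL.mul_inv_rev, hL.mul_inv_cancel_right, hL.inv_mul_cancel_left] at hD
  have hyx : (L.inv x ⬝ s) ⬝ L.inv z = y ⬝ x := by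
    rw [hD, hL.inv_mul_cancel_right]
  have hs : L.inv x ⬝ s = (y ⬝ x) ⬝ z := by
    rw [← hyx, hL.inv_mul_cancel_right]
  rw [← hs, hL.mul_inv_cancel_left]

end SatisfiesD15

end Loop

theorem stmt_15 (α : Type) (L : Loop α) (h : ∀ x y z : α, L.mul x (L.mul y (L.mul z x)) = L.mul (L.mul (L.mul x y) z) x) :
    ∀ x y z : α, L.mul x (L.mul (L.mul y x) z) = L.mul (L.mul x y) (L.mul x z) :=
  Loop.SatisfiesD15.satisfiesB23 h
end
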